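/- Let p be a prime, m ≥ 1, n = p^m, and χ a Dirichlet character modulo n with conductor p^t. For any non-negative integer k, ∑_{a ∈ (Z/nZ)*} ∑_{b₁,...,b_k ∈ Z/nZ} gcd(a-1, b₁, ..., b_k, n)·χ(a) = φ(p^m)·σ_k(p^{m-t}). -/

import Mathlib

/-!
Write `gcd(a - 1, b₁, …, b_k, n) = ∑ φ(d)` over the common divisors `d ∣ n` and exchange the
sums. For a fixed `d ∣ n` the contribution factors: the tuples `b` with `d ∣ bᵢ` for all `i`
number `(n / d)^k`, while the units `a ≡ 1 (mod d)` form the kernel of `(ℤ/n)ˣ → (ℤ/d)ˣ`, a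
subgroup of order `φ(n) / φ(d)` on which `χ` is trivial exactly when the conductor of `χ` divides
`d`; otherwise `χ` sums to zero over it. The sum is therefore
`φ(n) ∑_{cond χ ∣ d ∣ n} (n / d)^k = φ(n) σ_k(n / cond χ)`, for every modulus `n`.
-/

open Finset
open scoped Nat

@[to_additive card_ker_mul_card_of_surjective]
theorem MonoidHom.card_ker_mul_card_of_surjective {G H : Type*} [Group G] [Group H] (f : G →* H)
    (hf : Function.Surjective f) : Nat.card f.ker * Nat.card H = Nat.card G := by
  rw [← f.ker.card_mul_index, Subgroup.index_ker, MonoidHom.range_eq_top.2 hf, Subgroup.card_top]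

theorem Nat.sum_totient_filter_dvd {n : ℕ} (hn : n ≠ 0) (a : ℕ) :
    ∑ d ∈ n.divisors with d ∣ a, φ d = Nat.gcd a n := by
  have hdiv : (Nat.gcd a n).divisors = {d ∈ n.divisors | d ∣ a} := by
    ext d
    simp only [Nat.mem_divisors, mem_filter, Nat.dvd_gcd_iff, ne_eq, Nat.gcd_eq_zero_iff, hn,
      and_false, not_false_eq_true, and_true]
    tauto
  rw [← hdiv, Nat.sum_totient]

theorem Nat.sum_divisors_filter_dvd_div {M : Type*} [AddCommMonoid M] {c n : ℕ} (hn : n ≠ 0)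
    (hc : c ∣ n) (f : ℕ → M) :
    ∑ d ∈ n.divisors with c ∣ d, f (n / d) = ∑ e ∈ (n / c).divisors, f e := by
  obtain ⟨q, rfl⟩ := hc
  have hc0 : 0 < c := Nat.pos_of_ne_zero (left_ne_zero_of_mul hn)
  rw [Nat.mul_div_cancel_left q hc0, ← Nat.sum_div_divisors q f]
  refine sum_nbij' (· / c) (c * ·) ?_ ?_ ?_ ?_ ?_ <;>
    simp only [mem_filter, Nat.mem_divisors, and_imp]
  · rintro _ hd - ⟨e, rfl⟩
    rw [Nat.mul_div_cancel_left e hc0]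
    exact ⟨(Nat.mul_dvd_mul_iff_left hc0).1 hd, right_ne_zero_of_mul hn⟩
  · rintro e he -
    exact ⟨⟨Nat.mul_dvd_mul_left c he, hn⟩, dvd_mul_right c e⟩
  · rintro _ - - ⟨e, rfl⟩
    rw [Nat.mul_div_cancel_left e hc0]
  · intro e _ _
    exact Nat.mul_div_cancel_left e hc0
  · rintro _ - - ⟨e, rfl⟩
    rw [Nat.mul_div_cancel_left e hc0, Nat.mul_div_mul_left q e hc0]

namespace ZMod

variable {n d : ℕ} [NeZero n]

theorem dvd_val_iff_castHom_eq_zero (hd : d ∣ n) (v : ZMod n) :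
    d ∣ v.val ↔ castHom hd (ZMod d) v = 0 := by
  rw [castHom_apply, ← natCast_val, natCast_eq_zero_iff]

theorem dvd_val_sub_one_iff_unitsMap_eq_one (hd : d ∣ n) (a : (ZMod n)ˣ) :
    d ∣ ((a : ZMod n) - 1).val ↔ unitsMap hd a = 1 := by
  rw [dvd_val_iff_castHom_eq_zero hd, map_sub, map_one, sub_eq_zero, Units.ext_iff]
  rfl

theorem card_dvd_val (hd : d ∣ n) : Nat.card {v : ZMod n // d ∣ v.val} = n / d := by
  have : NeZero d := ⟨ne_zero_of_dvd_ne_zero (NeZero.ne n) hd⟩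
  let f := (castHom hd (ZMod d)).toAddMonoidHom
  have hker := f.card_ker_mul_card_of_surjective (ringHom_surjective _)
  rw [Nat.card_zmod, Nat.card_zmod] at hker
  rw [← Nat.eq_div_of_mul_eq_left (NeZero.ne d) hker]
  exact Nat.card_congr (Equiv.subtypeEquivRight fun v =>
    (dvd_val_iff_castHom_eq_zero hd v).trans (AddMonoidHom.mem_ker (f := f)).symm)

theorem card_pi_dvd_val {ι : Type*} [Fintype ι] (hd : d ∣ n) :
    Nat.card {b : ι → ZMod n // ∀ i, d ∣ (b i).val} = (n / d) ^ Fintype.card ι := by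
  rw [Nat.card_congr (Equiv.subtypePiEquivPi (p := fun _ (v : ZMod n) => d ∣ v.val)), Nat.card_pi,
    prod_const, card_dvd_val hd, card_univ]

theorem sum_ite_dvd_gcd_val {R : Type*} [CommSemiring R] {ι : Type*} [Fintype ι]
    [DecidableEq ι] (hd : d ∣ n) :
    ∑ b : ι → ZMod n, (if d ∣ univ.gcd (fun i => (b i).val) then (1 : R) else 0) =
      ((n / d) ^ Fintype.card ι : ℕ) := by
  simp only [Finset.dvd_gcd_iff, mem_univ, forall_const]
  rw [sum_boole, ← Fintype.card_subtype, ← Nat.card_eq_fintype_card, card_pi_dvd_val hd]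

theorem card_ker_unitsMap_mul_totient (hd : d ∣ n) :
    Nat.card (unitsMap hd).ker * φ d = φ n := by
  have : NeZero d := ⟨ne_zero_of_dvd_ne_zero (NeZero.ne n) hd⟩
  rw [← card_units_eq_totient, ← card_units_eq_totient, ← Nat.card_eq_fintype_card,
    ← Nat.card_eq_fintype_card]
  exact (unitsMap hd).card_ker_mul_card_of_surjective (unitsMap_surjective hd)

end ZMod

namespace DirichletCharacter

variable {R : Type*} [CommRing R] [IsDomain R] {n d : ℕ} [NeZero n]

theorem sum_ker_unitsMap (χ : DirichletCharacter R n) (hd : d ∣ n) :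
    ∑ a : (ZMod.unitsMap hd).ker, χ (a : (ZMod n)ˣ) =
      if χ.conductor ∣ d then (Nat.card (ZMod.unitsMap hd).ker : R) else 0 := by
  classical
  let ψ := (Units.coeHom R).comp (χ.toUnitHom.comp (ZMod.unitsMap hd).ker.subtype)
  have hψ : ψ = 1 ↔ χ.conductor ∣ d := by
    rw [← χ.mem_conductorSet_iff_conductor_dvd hd, mem_conductorSet_iff,
      factorsThrough_iff_ker_unitsMap hd, SetLike.le_def, DFunLike.ext_iff, Subtype.forall]
    simp only [MonoidHom.mem_ker, Units.ext_iff, MulChar.coe_toUnitHom, ψ, MonoidHom.comp_apply,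
      Subgroup.coe_subtype, Units.coeHom_apply, MonoidHom.one_apply, Units.val_one]
  have h := sum_hom_units ψ
  simp only [hψ, Nat.card_eq_fintype_card, Nat.cast_ite, Nat.cast_zero] at h ⊢
  exact h

theorem sum_ite_dvd_val_sub_one (χ : DirichletCharacter R n) (hd : d ∣ n) :
    ∑ a : (ZMod n)ˣ, (if d ∣ ((a : ZMod n) - 1).val then χ a else 0) =
      if χ.conductor ∣ d then (Nat.card (ZMod.unitsMap hd).ker : R) else 0 := by
  rw [← χ.sum_ker_unitsMap hd, ← sum_filter]
  exact sum_subtype _ (fun a => by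
    rw [mem_filter_univ, ZMod.dvd_val_sub_one_iff_unitsMap_eq_one hd, MonoidHom.mem_ker]) _

theorem sum_gcd_sub_one_mul_eq_totient_mul_sigma (k : ℕ) (χ : DirichletCharacter R n) :
    ∑ a : (ZMod n)ˣ, ∑ b : Fin k → ZMod n,
      (Nat.gcd ((a : ZMod n) - 1).val (Nat.gcd (univ.gcd fun i => (b i).val) n) : R) * χ a =
      (φ n * ArithmeticFunction.sigma k (n / χ.conductor) : ℕ) := by
  have hgcd (x y : ℕ) : (Nat.gcd x (Nat.gcd y n) : R) =
      ∑ d ∈ n.divisors, (φ d : R) * ((if d ∣ x then 1 else 0) * (if d ∣ y then 1 else 0)) := by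
    rw [← Nat.gcd_assoc, ← Nat.sum_totient_filter_dvd (NeZero.ne n), Nat.cast_sum, sum_filter]
    refine sum_congr rfl fun d _ => ?_
    simp only [Nat.dvd_gcd_iff, ite_and]
    split_ifs <;> simp
  calc _ = ∑ d ∈ n.divisors, (φ d : R) *
          ((∑ a : (ZMod n)ˣ, if d ∣ ((a : ZMod n) - 1).val then χ a else 0) *
            ∑ b : Fin k → ZMod n, if d ∣ univ.gcd (fun i => (b i).val) then 1 else 0) := by
        simp only [hgcd, sum_mul, mul_sum]
        simp_rw [sum_comm (t := n.divisors)]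
        refine sum_congr rfl fun d _ => ?_
        rw [sum_comm]
        refine sum_congr rfl fun a _ => sum_congr rfl fun b _ => ?_
        split_ifs <;> simp
    _ = (φ n * ∑ d ∈ n.divisors with χ.conductor ∣ d, (n / d) ^ k : ℕ) := by
        rw [mul_sum, sum_filter, Nat.cast_sum]
        refine sum_congr rfl fun d hd => ?_
        have hdn := Nat.dvd_of_mem_divisors hd
        rw [χ.sum_ite_dvd_val_sub_one hdn, ZMod.sum_ite_dvd_gcd_val hdn, Fintype.card_fin,
          ← ZMod.card_ker_unitsMap_mul_totient hdn]
        split_ifs <;> push_cast <;> ring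
    _ = _ := by
        rw [Nat.sum_divisors_filter_dvd_div (NeZero.ne n) χ.conductor_dvd_level (· ^ k),
          ArithmeticFunction.sigma_apply]

end DirichletCharacter

theorem menon_dirichlet_prime_power_general (p m t k : ℕ) [Fact p.Prime]
    (χ : DirichletCharacter ℂ (p ^ m)) (ht : χ.conductor = p ^ t) (htm : t ≤ m) :
    ∑ a : (ZMod (p ^ m))ˣ, ∑ b : Fin k → ZMod (p ^ m),
      (Nat.gcd ((a : ZMod (p ^ m)) - 1).val
        (Nat.gcd (Finset.univ.gcd fun i => (b i).val) (p ^ m)) : ℂ) * χ a =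
      (Nat.totient (p ^ m) * ArithmeticFunction.sigma k (p ^ (m - t)) : ℕ) := by
  rw [χ.sum_gcd_sub_one_mul_eq_totient_mul_sigma, ht, Nat.pow_div htm (Fact.out : p.Prime).pos]

/-- Prime power case of the main theorem: for `n = p^m`, `χ` a Dirichlet character mod `n`
with conductor `p^t`, and `k ≥ 0`:
`∑_{a,b₁,…,b_k} gcd(a-1, b₁, …, b_k, n) χ(a) = φ(p^m) · σ_k(p^(m-t))`. -/
theorem menon_dirichlet_prime_power (p m t k : ℕ) [Fact p.Prime] (hm : 1 ≤ m)
    (χ : DirichletCharacter ℂ (p ^ m)) (ht : χ.conductor = p ^ t) (htm : t ≤ m) :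
    ∑ a : (ZMod (p ^ m))ˣ, ∑ b : Fin k → ZMod (p ^ m),
      (Nat.gcd ((a : ZMod (p ^ m)) - 1).val
        (Nat.gcd (Finset.univ.gcd fun i => (b i).val) (p ^ m)) : ℂ) * χ a =
      (Nat.totient (p ^ m) * ArithmeticFunction.sigma k (p ^ (m - t)) : ℕ) :=
  menon_dirichlet_prime_power_general p m t k χ ht htm
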